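/- arXiv:1210.2083 — 5 statements merged into one kernel-verified Lean document; each statement's English description precedes it below -/
import Mathlib

section
/- Let A(x) ∈ M_{L×N}(ℤ[x]) with non-constant part A_*(x). Suppose the columns of A_*(x) are ℚ-linearly dependent, i.e. there exists a nonzero m ∈ ℚ^N with A_*(x)m identically zero. Then there exists an infinite subset X ⊂ 𝕋^N such that for every subtorus 𝒯 of 𝕋^L there exists ε > 0 such that for every integer n, the set A(n)X = {A(n)x : x ∈ X} is not ε-dense in any translate of 𝒯. (One may take X = {m/j : j = 1, 2, …}, interpreting m as an integer vector after clearing denominators, since then A(n)X = A_0 X for all n.) -/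
open scoped BigOperators
open Matrix

/-- The one-dimensional torus `𝕋 = ℝ/ℤ`. -/
abbrev Torus1 := AddCircle (1 : ℝ)

/-- Action of an `L × N` integer matrix on the torus `𝕋^N`, by left multiplication. -/
noncomputable def torusAct {L N : ℕ} (A : Matrix (Fin L) (Fin N) ℤ) (x : Fin N → Torus1) :
    Fin L → Torus1 :=
  fun i => ∑ j, A i j • x j

/-- `Y` is `ε`-dense in the full torus `𝕋^L`: every point of `𝕋^L` is within distance `ε`
of some element of `Y` in every coordinate. -/
def EpsDense {L : ℕ} (Y : Set (Fin L → Torus1)) (ε : ℝ) : Prop :=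
  ∀ t : Fin L → Torus1, ∃ y ∈ Y, ∀ i, dist (y i) (t i) ≤ ε

/-- `Y` is `ε`-dense in a subset `S` of `𝕋^L`. -/
def EpsDenseIn {L : ℕ} (Y S : Set (Fin L → Torus1)) (ε : ℝ) : Prop :=
  ∀ s ∈ S, ∃ y ∈ Y, ∀ i, dist (y i) (s i) ≤ ε

/-- A subtorus of `𝕋^L`: a nontrivial closed connected (Lie) subgroup. -/
def IsSubtorus {L : ℕ} (T : AddSubgroup (Fin L → Torus1)) : Prop :=
  IsClosed (T : Set (Fin L → Torus1)) ∧ IsConnected (T : Set (Fin L → Torus1)) ∧ T ≠ ⊥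

/-- The translate `t + 𝒯` of a subtorus. -/
def translateOf {L : ℕ} (t : Fin L → Torus1) (T : AddSubgroup (Fin L → Torus1)) :
    Set (Fin L → Torus1) :=
  (fun y => t + y) '' (T : Set (Fin L → Torus1))

/-- Evaluation at an integer `n` of the matrix of polynomials
`A(x) = A 0 + x • A 1 + ⋯ + x^D • A D`. -/
def evalMat {L N D : ℕ} (A : Fin (D + 1) → Matrix (Fin L) (Fin N) ℤ) (n : ℤ) :
    Matrix (Fin L) (Fin N) ℤ :=
  ∑ d : Fin (D + 1), n ^ (d : ℕ) • A d

/-- Condition (a): the columns of the non-constant part `A_*(x)` are `ℚ`-linearly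
independent, i.e. the only `w ∈ ℚ^N` with `A_*(x) w ≡ 0` is `w = 0`. -/
def CondA {L N D : ℕ} (A : Fin (D + 1) → Matrix (Fin L) (Fin N) ℤ) : Prop :=
  ∀ w : Fin N → ℚ,
    (∀ d : Fin (D + 1), d ≠ 0 → ((A d).map ((↑) : ℤ → ℚ)).mulVec w = 0) → w = 0

/-- Condition (b): whenever `v ⬝ A_d w = 0` for all `d = 1, …, D`, also `v ⬝ A_0 w = 0`. -/
def CondB {L N D : ℕ} (A : Fin (D + 1) → Matrix (Fin L) (Fin N) ℤ) : Prop :=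
  ∀ (v : Fin L → ℚ) (w : Fin N → ℚ),
    (∀ d : Fin (D + 1), d ≠ 0 → v ⬝ᵥ ((A d).map ((↑) : ℤ → ℚ)).mulVec w = 0) →
    v ⬝ᵥ ((A 0).map ((↑) : ℤ → ℚ)).mulVec w = 0

/-- `‖A_*‖_∞`: the maximum of the absolute values of the integer coefficients appearing
in the non-constant part of `A`. -/
def starNorm {L N D : ℕ} (A : Fin (D + 1) → Matrix (Fin L) (Fin N) ℤ) : ℕ :=
  (Finset.univ.filter (fun d : Fin (D + 1) => d ≠ 0)).sup fun d =>
    Finset.univ.sup fun p : Fin L × Fin N => (A d p.1 p.2).natAbs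

/-!
Take `X = {x_k}` with `x_k = m / (k + 1)`. Since `A_d m = 0` for `d ≥ 1`, we have
`A(n) x_k = A_0 m / (k + 1)` for every `n`, so every `A(n) X` is the same sequence, converging
to `0`. Its values in a coordinate `i`, together with their limit, form a countable closed subset
of the circle, which therefore misses a ball around some point `θ`. On the other hand, if `𝒯`
projects nontrivially to coordinate `i`, that projection is a nontrivial connected subgroup of
the circle, hence dense (its preimage in `ℝ` is not cyclic), so every translate of `𝒯` has
points whose `i`-th coordinate is arbitrarily close to `θ`.
-/

open Filter Metric Topology

instance AddCircle.uncountable (p : ℝ) [Fact (0 < p)] : Uncountable (AddCircle p) := by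
  have : Uncountable (Set.Ico (0 : ℝ) (0 + p)) := by
    rw [← not_countable_iff, Set.countable_coe_iff, Cardinal.Real.Ico_countable_iff, not_le]
    simpa using (Fact.out : 0 < p)
  exact (AddCircle.equivIco p 0).symm.injective.uncountable

theorem exists_forall_le_dist_of_tendsto {X : Type*} [MetricSpace X] [Uncountable X]
    {u : ℕ → X} {a : X} (hu : Tendsto u atTop (𝓝 a)) :
    ∃ θ : X, ∃ δ > 0, ∀ k, δ ≤ dist (u k) θ := by
  set K := insert a (Set.range u)
  obtain ⟨θ, hθ⟩ : ∃ θ, θ ∉ K := by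
    by_contra! h
    exact Set.not_countable_univ (((Set.countable_range u).insert a).mono fun x _ => h x)
  obtain ⟨δ, hδ, hball⟩ := isOpen_iff.mp hu.isCompact_insert_range.isClosed.isOpen_compl θ hθ
  refine ⟨θ, δ, hδ, fun k => ?_⟩
  by_contra! hk
  exact hball (mem_ball.mpr hk) (Set.mem_insert_of_mem a (Set.mem_range_self k))

theorem AddCircle.dense_of_isPreconnected {p : ℝ} [Fact (0 < p)] (H : AddSubgroup (AddCircle p))
    (hconn : IsPreconnected (H : Set (AddCircle p))) (hH : H ≠ ⊥) :
    Dense (H : Set (AddCircle p)) := by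
  set π : ℝ →+ AddCircle p := QuotientAddGroup.mk' (AddSubgroup.zmultiples p)
  have hπ : Function.Surjective π := QuotientAddGroup.mk'_surjective _
  rcases (H.comap π).dense_or_cyclic with hdense | ⟨a, ha⟩
  · exact (hπ.denseRange.dense_image (AddCircle.continuous_mk' p) hdense).mono
      (Set.image_subset_iff.mpr subset_rfl)
  · exfalso
    obtain ⟨z, hz⟩ : ∃ z : ℤ, z • a = p := by
      rw [← AddSubgroup.mem_closure_singleton, ← ha, AddSubgroup.mem_comap]
      change (p : AddCircle p) ∈ H
      rw [AddCircle.coe_period]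
      exact H.zero_mem
    -- `H` is killed by `z`, hence finite; but a preconnected set with two points is infinite.
    have htors : (H : Set (AddCircle p)) ⊆ {u | z.natAbs • u = 0} := by
      intro h hh
      obtain ⟨x, rfl⟩ := hπ h
      have hx : x ∈ AddSubgroup.closure {a} := ha ▸ hh
      obtain ⟨k, rfl⟩ := AddSubgroup.mem_closure_singleton.mp hx
      change z.natAbs • π (k • a) = 0
      rw [natAbs_nsmul_eq_zero, ← map_zsmul, smul_comm, hz]
      exact (AddCircle.coe_eq_zero_iff p).mpr ⟨k, rfl⟩
    have hz0 : z ≠ 0 := by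
      rintro rfl
      exact (Fact.out : 0 < p).ne (by simpa using hz)
    have hfin := (AddCircle.finite_torsion p (Int.natAbs_pos.mpr hz0)).subset htors
    refine hH ((AddSubgroup.eq_bot_iff_forall H).mpr fun h hh => ?_)
    by_contra hne
    exact (hconn.infinite_of_nontrivial ⟨h, hh, 0, H.zero_mem, hne⟩) hfin

theorem infinite_range_coe_div_succ {c : ℝ} (hc : c ≠ 0) :
    (Set.range fun k : ℕ => ((c / (k + 1) : ℝ) : Torus1)).Infinite := by
  set K := ⌈2 * |c|⌉₊
  have hsmall : ∀ k ∈ Set.Ici K, c / (k + 1) ∈ Set.Ico (-(1 / 2) : ℝ) (-(1 / 2) + 1) := by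
    intro k hk
    have hk : 2 * |c| < k + 1 := by
      have : (K : ℝ) ≤ k := by exact_mod_cast hk
      linarith [Nat.le_ceil (2 * |c|)]
    have : |c / (k + 1)| < 1 / 2 := by
      rw [abs_div, abs_of_pos (by positivity : (0 : ℝ) < k + 1), div_lt_iff₀ (by positivity)]
      linarith
    obtain ⟨hlo, hhi⟩ := abs_lt.mp this
    constructor <;> linarith
  have hinj : Set.InjOn (fun k : ℕ => ((c / (k + 1) : ℝ) : Torus1)) (Set.Ici K) := by
    intro k hk k' hk' h
    have h := (AddCircle.coe_eq_coe_iff_of_mem_Ico (hsmall k hk) (hsmall k' hk')).mp h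
    rw [div_eq_div_iff (by positivity) (by positivity)] at h
    exact_mod_cast (add_right_cancel (mul_left_cancel₀ hc h)).symm
  exact ((Set.Ici_infinite K).image hinj).mono (Set.image_subset_range _ _)

theorem torusAct_coe_div {L N : ℕ} (B : Matrix (Fin L) (Fin N) ℤ) (v : Fin N → ℚ) (c : ℝ) :
    torusAct B (fun j => ((v j / c : ℝ) : Torus1)) =
      fun i => (((B.map ((↑) : ℤ → ℚ) *ᵥ v) i / c : ℝ) : Torus1) := by
  funext i
  simp only [torusAct, ← AddCircle.coe_zsmul, mulVec, dotProduct, Matrix.map_apply]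
  rw [← QuotientAddGroup.mk_sum]
  congr 1
  push_cast
  rw [Finset.sum_div]
  exact Finset.sum_congr rfl fun j _ => by rw [zsmul_eq_mul]; ring

theorem evalMat_mulVec_of_forall_ne_zero {L N D : ℕ} (A : Fin (D + 1) → Matrix (Fin L) (Fin N) ℤ)
    {v : Fin N → ℚ} (hv : ∀ d : Fin (D + 1), d ≠ 0 → (A d).map ((↑) : ℤ → ℚ) *ᵥ v = 0) (n : ℤ) :
    (evalMat A n).map ((↑) : ℤ → ℚ) *ᵥ v = (A 0).map ((↑) : ℤ → ℚ) *ᵥ v := by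
  have : (evalMat A n).map ((↑) : ℤ → ℚ) =
      ∑ d : Fin (D + 1), (n : ℚ) ^ (d : ℕ) • (A d).map (↑) := by
    ext i j
    simp [evalMat, Matrix.sum_apply]
  rw [this, Matrix.sum_mulVec, Finset.sum_eq_single 0 (fun d _ hd => by
    rw [Matrix.smul_mulVec, hv d hd, smul_zero]) (by simp)]
  simp

theorem IsSubtorus.exists_dense_image_eval {L : ℕ} {T : AddSubgroup (Fin L → Torus1)}
    (hT : IsSubtorus T) : ∃ i, Dense ((fun y : Fin L → Torus1 => y i) '' T) := by
  obtain ⟨-, hconn, hbot⟩ := hT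
  obtain ⟨x, hxT, hx⟩ := T.bot_or_exists_ne_zero.resolve_left hbot
  obtain ⟨i, hi⟩ := Function.ne_iff.mp hx
  refine ⟨i, ?_⟩
  simpa using AddCircle.dense_of_isPreconnected (T.map (Pi.evalAddMonoidHom (fun _ => Torus1) i))
    (hconn.isPreconnected.image _ (continuous_apply i).continuousOn)
    (AddSubgroup.ne_bot_iff_exists_ne_zero.mpr
      ⟨⟨x i, x, hxT, rfl⟩, fun h => hi (congrArg Subtype.val h)⟩)

theorem statement3_general (L N D : ℕ)
    (A : Fin (D + 1) → Matrix (Fin L) (Fin N) ℤ)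
    (m : Fin N → ℚ) (hm : m ≠ 0)
    (hdep : ∀ d : Fin (D + 1), d ≠ 0 → ((A d).map ((↑) : ℤ → ℚ)).mulVec m = 0) :
    ∃ X : Set (Fin N → Torus1), X.Infinite ∧
      ∀ T : AddSubgroup (Fin L → Torus1), IsSubtorus T →
        ∃ ε : ℝ, 0 < ε ∧ ∀ n : ℤ, ∀ t : Fin L → Torus1,
          ¬ EpsDenseIn (torusAct (evalMat A n) '' X) (translateOf t T) ε := by
  set x : ℕ → Fin N → Torus1 := fun k j => ((m j / (k + 1) : ℝ) : Torus1)
  refine ⟨Set.range x, ?_, fun T hT => ?_⟩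
  · obtain ⟨j, hj⟩ := Function.ne_iff.mp hm
    refine Set.Infinite.of_image (fun y => y j) ?_
    rw [← Set.range_comp]
    exact infinite_range_coe_div_succ (by exact_mod_cast hj)
  obtain ⟨i, hi⟩ := hT.exists_dense_image_eval
  set c : ℝ := ↑(((A 0).map ((↑) : ℤ → ℚ) *ᵥ m) i)
  have hAx : ∀ n k, torusAct (evalMat A n) (x k) i = ((c / (k + 1) : ℝ) : Torus1) := by
    intro n k
    rw [torusAct_coe_div, evalMat_mulVec_of_forall_ne_zero A hdep]
  have hu : Tendsto (fun k : ℕ => ((c / (k + 1) : ℝ) : Torus1)) atTop (𝓝 ((0 : ℝ) : Torus1)) :=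
    (AddCircle.continuous_mk' 1).continuousAt.tendsto.comp
      (by simpa [div_eq_mul_inv] using tendsto_one_div_add_atTop_nhds_zero_nat.const_mul c)
  obtain ⟨θ, δ, hδ, hfar⟩ := exists_forall_le_dist_of_tendsto hu
  refine ⟨δ / 2, half_pos hδ, fun n t hdense => ?_⟩
  obtain ⟨_, ⟨h, hhT, rfl⟩, hclose⟩ := hi.exists_dist_lt (θ - t i) (half_pos hδ)
  obtain ⟨_, ⟨_, ⟨k, rfl⟩, rfl⟩, hy⟩ := hdense (t + h) ⟨h, hhT, rfl⟩
  have hθ : dist (t i + h i) θ < δ / 2 := by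
    rwa [← add_sub_cancel (t i) θ, dist_add_left, dist_comm]
  have hyi := hy i
  rw [hAx, Pi.add_apply] at hyi
  linarith [hfar k, dist_triangle ((c / (k + 1) : ℝ) : Torus1) (t i + h i) θ]

/-- **Necessity of condition (a).** If the columns of the non-constant part `A_*(x)` are
`ℚ`-linearly dependent, then there is an infinite `X ⊆ 𝕋^N` such that for every subtorus
`𝒯` of `𝕋^L` there is an `ε > 0` such that no dilation `A(n) X` is `ε`-dense in any
translate of `𝒯`. -/
theorem statement3 (L N D : ℕ) (hL : 0 < L) (hN : 0 < N) (hD : 0 < D)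
    (A : Fin (D + 1) → Matrix (Fin L) (Fin N) ℤ)
    (m : Fin N → ℚ) (hm : m ≠ 0)
    (hdep : ∀ d : Fin (D + 1), d ≠ 0 → ((A d).map ((↑) : ℤ → ℚ)).mulVec m = 0) :
    ∃ X : Set (Fin N → Torus1), X.Infinite ∧
      ∀ T : AddSubgroup (Fin L → Torus1), IsSubtorus T →
        ∃ ε : ℝ, 0 < ε ∧ ∀ n : ℤ, ∀ t : Fin L → Torus1,
          ¬ EpsDenseIn (torusAct (evalMat A n) '' X) (translateOf t T) ε :=
  statement3_general L N D A m hm hdep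
end

section
/- Let D and k be positive integers, let x_1, …, x_k be k distinct points of 𝕋 = ℝ/ℤ, and set H_m = Σ_{j=1}^m h_j where h_j = #{(i,i') : 1 ≤ i,i' ≤ k and j(x_i − x_{i'}) ∈ ℤ}. If s_2, s_3, … is a sequence of nonnegative integers such that the partial sums S_b = s_2 + ⋯ + s_b satisfy S_b ≤ H_b and S_b ≤ k² for every b ≥ 2, then Σ_{b=2}^∞ s_b · b^{-1/D} ≤ C(D) · k^{2 − 1/(2D)} for a constant C(D) depending only on D. -/
open scoped BigOperators
open Matrix

/-- For distinct points `x 1, …, x k` of `𝕋`, the number `h_m` of pairs `(i, j)` with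
`m (x i − x j) ∈ ℤ`, i.e. `m • (x i − x j) = 0` in `𝕋`. -/
noncomputable def hcount {k : ℕ} (x : Fin k → Torus1) (m : ℕ) : ℕ :=
  Nat.card {p : Fin k × Fin k // m • (x p.1 - x p.2) = 0}

/-!
The `j`-torsion of `𝕋` has `j` points, so `h_j ≤ j k` and the partial sums satisfy
`S_b ≤ min (k b², k²)`; the two bounds cross at `M = ⌊√k⌋`. The terms with `b > M` contribute
at most `(M + 1)^{-1/D} k² ≤ k^{2 - 1/(2D)}`. For `b ≤ M`, summation by parts against the
increments `b^{-p} - (b + 1)^{-p} ≤ p b^{-p-1}` (Bernoulli) turns `S_b ≤ k b²` into the bound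
`(1 + p) k M^{2-p} ≤ (1 + p) k^{2 - p/2}`, with `p = 1/D`.
-/

open Finset

theorem AddCircle.natCard_torsion_le {p : ℝ} {n : ℕ} (hn : 0 < n) :
    Nat.card {y : AddCircle p | n • y = 0} ≤ n := by
  have hreg : IsSMulRegular ℝ n := .of_right_eq_zero_of_smul fun _ ↦ by simp [hn.ne']
  rw [Nat.card_coe_set_eq, Set.ncard_def]
  exact ENat.toNat_le_of_le_natCast (AddCircle.card_torsion_le_of_isSMulRegular p n hn.ne' hreg)

theorem hcount_le_mul {k : ℕ} {x : Fin k → Torus1} (hx : Function.Injective x) {j : ℕ}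
    (hj : 0 < j) : hcount x j ≤ j * k := by
  have : Finite {y : Torus1 | j • y = 0} := (AddCircle.finite_torsion (1 : ℝ) hj).to_subtype
  have hinj : Function.Injective fun q : {q : Fin k × Fin k // j • (x q.1 - x q.2) = 0} ↦
      ((q.1.1, ⟨x q.1.1 - x q.1.2, q.2⟩) : Fin k × {y : Torus1 | j • y = 0}) := by
    rintro ⟨⟨a, b⟩, _⟩ ⟨⟨c, d⟩, _⟩ h
    simp only [Prod.mk.injEq, Subtype.mk.injEq] at h
    obtain ⟨rfl, h⟩ := h
    simp [hx (sub_right_injective h)]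
  calc hcount x j ≤ Nat.card (Fin k × {y : Torus1 | j • y = 0}) :=
        Nat.card_le_card_of_injective _ hinj
    _ = k * Nat.card {y : Torus1 | j • y = 0} := by rw [Nat.card_prod, Nat.card_fin]
    _ ≤ j * k := by rw [mul_comm]; exact Nat.mul_le_mul_right k (AddCircle.natCard_torsion_le hj)

theorem sum_hcount_le {k : ℕ} {x : Fin k → Torus1} (hx : Function.Injective x) (b : ℕ) :
    ∑ j ∈ Icc 1 b, hcount x j ≤ k * b ^ 2 :=
  calc ∑ j ∈ Icc 1 b, hcount x j ≤ ∑ _j ∈ Icc 1 b, b * k :=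
        sum_le_sum fun j hj ↦ (hcount_le_mul hx (mem_Icc.1 hj).1).trans
          (Nat.mul_le_mul_right k (mem_Icc.1 hj).2)
    _ = k * b ^ 2 := by rw [sum_const, Nat.card_Icc, smul_eq_mul, Nat.add_sub_cancel]; ring

theorem sum_Icc_mul_eq_by_parts (s f : ℕ → ℝ) {a N : ℕ} (haN : a ≤ N) :
    ∑ b ∈ Icc a N, s b * f b =
      f N * ∑ j ∈ Icc a N, s j + ∑ m ∈ Ico a N, (f m - f (m + 1)) * ∑ j ∈ Icc a m, s j := by
  induction N, haN using Nat.le_induction with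
  | base => simp [mul_comm]
  | succ N haN ih =>
    rw [sum_Icc_succ_top (by omega), sum_Icc_succ_top (by omega), sum_Ico_succ_top haN, ih]
    ring

theorem sum_Icc_mul_le_of_sum_Icc_le {s f G : ℕ → ℝ} {a N : ℕ} (haN : a ≤ N)
    (hf : ∀ m ∈ Ico a N, f (m + 1) ≤ f m) (hfN : 0 ≤ f N)
    (hG : ∀ m ∈ Icc a N, ∑ j ∈ Icc a m, s j ≤ G m) :
    ∑ b ∈ Icc a N, s b * f b ≤ f N * G N + ∑ m ∈ Ico a N, (f m - f (m + 1)) * G m := by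
  rw [sum_Icc_mul_eq_by_parts s f haN]
  gcongr with m hm
  · exact hG N (right_mem_Icc.2 haN)
  · exact sub_nonneg.2 (hf m hm)
  · exact hG m (Ico_subset_Icc_self hm)

theorem rpow_neg_sub_rpow_neg_add_one_le {p x : ℝ} (hp₀ : 0 ≤ p) (hp₁ : p ≤ 1) (hx : 0 < x) :
    x ^ (-p) - (x + 1) ^ (-p) ≤ p * x ^ (-p - 1) := by
  have hbern : (x + 1) ^ p ≤ x ^ p * (1 + p / x) := by
    rw [show x + 1 = x * (1 + 1 / x) by field_simp, Real.mul_rpow hx.le (by positivity)]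
    gcongr
    simpa [div_eq_mul_one_div p x] using
      rpow_one_add_le_one_add_mul_self (by linarith [inv_pos.2 hx]) hp₀ hp₁
  have hx₁ : 0 < (x + 1) ^ p := by positivity
  have hxp : 0 < x ^ p := by positivity
  have key : x ^ (-p) * (1 - p / x) ≤ (x + 1) ^ (-p) := by
    rw [Real.rpow_neg hx.le, Real.rpow_neg (by linarith), ← div_eq_inv_mul, inv_eq_one_div,
      div_le_div_iff₀ hxp hx₁]
    rcases le_total (1 - p / x) 0 with h | h
    · nlinarith
    · nlinarith [mul_le_mul_of_nonneg_right hbern h, sq_nonneg (p / x)]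
  rw [Real.rpow_sub_one hx.ne']
  linear_combination key

theorem sum_Icc_two_mul_rpow_neg_le_of_sum_le_mul_sq {p c : ℝ} (hp₀ : 0 ≤ p) (hp₁ : p ≤ 1)
    (hc : 0 ≤ c) {s : ℕ → ℝ} {M : ℕ} (hS : ∀ m ∈ Icc 2 M, ∑ j ∈ Icc 2 m, s j ≤ c * m ^ 2) :
    ∑ b ∈ Icc 2 M, s b * (b : ℝ) ^ (-p) ≤ (1 + p) * c * (M : ℝ) ^ (2 - p) := by
  rcases lt_or_ge M 2 with hM | hM
  · rw [Icc_eq_empty (by omega), sum_empty]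
    positivity
  have hM₀ : (0 : ℝ) < M := by positivity
  have hstep : ∀ m ∈ Ico 2 M,
      ((m : ℝ) ^ (-p) - ((m + 1 : ℕ) : ℝ) ^ (-p)) * (c * (m : ℝ) ^ 2) ≤
        p * c * (M : ℝ) ^ (1 - p) := by
    intro m hm
    have hm₀ : (0 : ℝ) < m := by have := (mem_Ico.1 hm).1; positivity
    calc _ ≤ p * (m : ℝ) ^ (-p - 1) * (c * (m : ℝ) ^ (2 : ℝ)) := by
          rw [Real.rpow_two]
          gcongr
          push_cast
          exact rpow_neg_sub_rpow_neg_add_one_le hp₀ hp₁ hm₀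
      _ = p * c * (m : ℝ) ^ (1 - p) := by
          rw [mul_mul_mul_comm, mul_comm _ c, ← Real.rpow_add hm₀,
            show -p - 1 + 2 = 1 - p by ring]
      _ ≤ p * c * (M : ℝ) ^ (1 - p) := by
          gcongr p * c * ?_
          exact Real.rpow_le_rpow hm₀.le (by exact_mod_cast (mem_Ico.1 hm).2.le) (by linarith)
  calc ∑ b ∈ Icc 2 M, s b * (b : ℝ) ^ (-p)
      ≤ (M : ℝ) ^ (-p) * (c * (M : ℝ) ^ 2) +
          ∑ m ∈ Ico 2 M, ((m : ℝ) ^ (-p) - ((m + 1 : ℕ) : ℝ) ^ (-p)) * (c * (m : ℝ) ^ 2) :=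
        sum_Icc_mul_le_of_sum_Icc_le hM
          (fun m hm ↦ Real.rpow_le_rpow_of_nonpos (by have := (mem_Ico.1 hm).1; positivity)
            (by push_cast; linarith) (by linarith)) (by positivity) hS
    _ ≤ c * (M : ℝ) ^ (2 - p) + M * (p * c * (M : ℝ) ^ (1 - p)) := by
        refine add_le_add (le_of_eq ?_) ((sum_le_sum hstep).trans ?_)
        · rw [← Real.rpow_two, mul_left_comm, ← Real.rpow_add hM₀, neg_add_eq_sub]
        · rw [sum_const, Nat.card_Ico, nsmul_eq_mul]
          gcongr
          exact_mod_cast Nat.sub_le M 2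
    _ = (1 + p) * c * (M : ℝ) ^ (2 - p) := by
        rw [show (2 : ℝ) - p = 1 + (1 - p) by ring, Real.rpow_add hM₀, Real.rpow_one]
        ring

theorem sum_Icc_two_mul_rpow_neg_le_of_sum_le_min {p : ℝ} (hp₀ : 0 ≤ p) (hp₁ : p ≤ 1) {k : ℕ}
    (hk : 0 < k) {s : ℕ → ℝ} (hs : ∀ b, 0 ≤ s b)
    (hS₁ : ∀ m, 2 ≤ m → ∑ j ∈ Icc 2 m, s j ≤ k * m ^ 2)
    (hS₂ : ∀ m, 2 ≤ m → ∑ j ∈ Icc 2 m, s j ≤ k ^ 2) (N : ℕ) :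
    ∑ b ∈ Icc 2 N, s b * (b : ℝ) ^ (-p) ≤ (2 + p) * (k : ℝ) ^ (2 - p / 2) := by
  set M := Nat.sqrt k
  have hk₀ : (0 : ℝ) < k := by positivity
  have hM : (M : ℝ) ^ (2 - p) ≤ (k : ℝ) ^ (1 - p / 2) := by
    rw [show 2 - p = 2 * (1 - p / 2) by ring, Real.rpow_mul M.cast_nonneg, Real.rpow_two]
    exact Real.rpow_le_rpow (by positivity) (by exact_mod_cast Nat.sqrt_le' k) (by linarith)
  have hM₁ : ((M + 1 : ℕ) : ℝ) ^ (-p) ≤ (k : ℝ) ^ (-p / 2) := by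
    calc ((M + 1 : ℕ) : ℝ) ^ (-p) = (((M + 1 : ℕ) : ℝ) ^ 2) ^ (-p / 2) := by
          rw [← Real.rpow_two, ← Real.rpow_mul (Nat.cast_nonneg _)]
          ring_nf
      _ ≤ (k : ℝ) ^ (-p / 2) := Real.rpow_le_rpow_of_nonpos hk₀
          (by exact_mod_cast (Nat.lt_succ_sqrt' k).le) (by linarith)
  have hS : ∑ j ∈ Icc 2 N, s j ≤ k ^ 2 := by
    rcases lt_or_ge N 2 with hN | hN
    · rw [Icc_eq_empty (by omega), sum_empty]
      positivity
    · exact hS₂ N hN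
  have head :
      ∑ b ∈ Icc 2 N with b ≤ M, s b * (b : ℝ) ^ (-p) ≤ (1 + p) * (k : ℝ) ^ (2 - p / 2) :=
    calc _ ≤ ∑ b ∈ Icc 2 M, s b * (b : ℝ) ^ (-p) :=
          sum_le_sum_of_subset_of_nonneg (fun b ↦ by simp only [mem_filter, mem_Icc]; omega)
            fun b _ _ ↦ mul_nonneg (hs b) (by positivity)
      _ ≤ (1 + p) * k * (M : ℝ) ^ (2 - p) :=
          sum_Icc_two_mul_rpow_neg_le_of_sum_le_mul_sq hp₀ hp₁ k.cast_nonneg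
            fun m hm ↦ hS₁ m (mem_Icc.1 hm).1
      _ ≤ (1 + p) * k * (k : ℝ) ^ (1 - p / 2) := by gcongr
      _ = (1 + p) * (k : ℝ) ^ (2 - p / 2) := by
          rw [show 2 - p / 2 = 1 + (1 - p / 2) by ring, Real.rpow_add hk₀, Real.rpow_one]
          ring
  have tail : ∑ b ∈ Icc 2 N with ¬b ≤ M, s b * (b : ℝ) ^ (-p) ≤ (k : ℝ) ^ (2 - p / 2) :=
    calc _ ≤ ∑ b ∈ Icc 2 N with ¬b ≤ M, s b * ((M + 1 : ℕ) : ℝ) ^ (-p) := by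
          refine sum_le_sum fun b hb ↦ mul_le_mul_of_nonneg_left ?_ (hs b)
          exact Real.rpow_le_rpow_of_nonpos (by positivity)
            (by exact_mod_cast not_le.1 (mem_filter.1 hb).2) (by linarith)
      _ ≤ (∑ b ∈ Icc 2 N, s b) * ((M + 1 : ℕ) : ℝ) ^ (-p) := by
          rw [sum_mul]
          exact sum_le_sum_of_subset_of_nonneg (filter_subset _ _)
            fun b _ _ ↦ mul_nonneg (hs b) (by positivity)
      _ ≤ (k : ℝ) ^ 2 * (k : ℝ) ^ (-p / 2) := by gcongr
      _ = (k : ℝ) ^ (2 - p / 2) := by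
          rw [← Real.rpow_two, ← Real.rpow_add hk₀]
          ring_nf
  rw [← sum_filter_add_sum_filter_not _ (· ≤ M)]
  linarith

/-- **Corollary 1.** If `s₂, s₃, …` are nonnegative integers whose partial sums
`S_b = s₂ + ⋯ + s_b` satisfy `S_b ≤ H_b` and `S_b ≤ k²` for all `b ≥ 2`, then
`∑_{b ≥ 2} s_b b^{-1/D} ≤ C(D) k^{2 - 1/(2D)}` for a constant `C(D)` depending only
on `D`. -/
theorem statement8 (D : ℕ) (hD : 0 < D) :
    ∃ C : ℝ, 0 < C ∧
      ∀ (k : ℕ), 0 < k → ∀ (x : Fin k → Torus1), Function.Injective x →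
        ∀ s : ℕ → ℕ,
          (∀ b : ℕ, 2 ≤ b → (∑ j ∈ Finset.Icc 2 b, s j) ≤ ∑ j ∈ Finset.Icc 1 b, hcount x j) →
          (∀ b : ℕ, 2 ≤ b → (∑ j ∈ Finset.Icc 2 b, s j) ≤ k ^ 2) →
          (∑' b : ℕ, (if 2 ≤ b then (s b : ℝ) * (b : ℝ) ^ (-(1 : ℝ) / (D : ℝ)) else 0)) ≤
            C * (k : ℝ) ^ ((2 : ℝ) - 1 / (2 * (D : ℝ))) := by
  have hp₁ : 1 / (D : ℝ) ≤ 1 := div_le_one_of_le₀ (by exact_mod_cast hD) D.cast_nonneg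
  refine ⟨2 + 1 / D, by positivity, fun k hk x hx s hH hk₂ ↦ ?_⟩
  have hS₁ (m : ℕ) (hm : 2 ≤ m) : ∑ j ∈ Icc 2 m, (s j : ℝ) ≤ k * m ^ 2 := by
    exact_mod_cast (hH m hm).trans (sum_hcount_le hx m)
  have hS₂ (m : ℕ) (hm : 2 ≤ m) : ∑ j ∈ Icc 2 m, (s j : ℝ) ≤ k ^ 2 := by
    exact_mod_cast hk₂ m hm
  rw [neg_div, show (2 : ℝ) - 1 / (2 * D) = 2 - 1 / D / 2 by ring]
  refine Real.tsum_le_of_sum_range_le (fun b ↦ by split_ifs <;> positivity) fun n ↦ ?_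
  rw [← sum_filter]
  calc ∑ b ∈ range n with 2 ≤ b, (s b : ℝ) * (b : ℝ) ^ (-(1 / (D : ℝ)))
      ≤ ∑ b ∈ Icc 2 n, (s b : ℝ) * (b : ℝ) ^ (-(1 / (D : ℝ))) :=
        sum_le_sum_of_subset_of_nonneg
          (fun b ↦ by simp only [mem_filter, mem_range, mem_Icc]; omega) fun _ _ _ ↦ by positivity
    _ ≤ _ := sum_Icc_two_mul_rpow_neg_le_of_sum_le_min (by positivity) hp₁ hk
        (fun b ↦ (s b).cast_nonneg) hS₁ hS₂ n
end

section
/- Let 0 < ε ≤ 1/2 and let ξ_1, …, ξ_k ∈ ℝ^ℓ be such that ‖ξ_i‖ ≥ ε for every i = 1, …, k, where ‖ξ‖ denotes the distance from ξ to the nearest point of ℤ^ℓ in the sup norm. Then k/3 ≤ Σ_{m ∈ ℤ^ℓ, 0 < ‖m‖_∞ ≤ ⌊ℓ/ε⌋} | Σ_{i=1}^k exp(2πi m·ξ_i) |. -/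
open scoped BigOperators
open Matrix

/-- The finite set of frequencies `m ∈ ℤ^ℓ` with `0 < ‖m‖_∞ ≤ M`. -/
noncomputable def freqBox (l M : ℕ) : Finset (Fin l → ℤ) :=
  (Finset.Icc (fun _ : Fin l => -(M : ℤ)) (fun _ : Fin l => (M : ℤ))).filter (· ≠ 0)

/-!
Let `H(t) = |∑_{n ≤ m} e(nt)|² = ∑_{|n| ≤ m} (m + 1 - |n|) e(nt)`, a multiple of the Fejér
kernel; if `‖t‖ ≥ ε` then `H(t) ≤ B := 1 / sin²(πε)`. The trigonometric polynomial
`K(x) = ∏_j H(x_j)² - B ∑_i H(x_i) ∏_{j ≠ i} H(x_j)²`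
has frequencies in `[-2m, 2m]^ℓ` and is `≤ 0` at every `ξ_i`, since some coordinate of `ξ_i` is
`ε`-far from `ℤ`. With `Q = ∑_n (m + 1 - |n|)²`, all Fourier coefficients of `K` are bounded by
`Q^ℓ`, and for `m = ⌊⌊ℓ/ε⌋/2⌋` the constant one is at least `Q^ℓ / 3`. Summing `K(ξ_i)` over `i`
and splitting off the zero frequency gives `(Q^ℓ / 3) k ≤ Q^ℓ ∑_{γ ≠ 0} |∑_i e(γ·ξ_i)|`.
-/

namespace BartonMontgomeryVaaler

open Finset Real
open Complex (I normSq)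

noncomputable def e (t : ℝ) : ℂ := Complex.exp (2 * π * I * t)

lemma e_add (s t : ℝ) : e (s + t) = e s * e t := by
  simp only [e, ← Complex.exp_add, Complex.ofReal_add]; ring_nf

lemma e_zero : e 0 = 1 := by simp [e]

lemma e_neg (t : ℝ) : e (-t) = starRingEnd ℂ (e t) := by
  simp only [e, ← Complex.exp_conj, map_mul, Complex.conj_I, Complex.conj_ofReal, map_ofNat,
    Complex.ofReal_neg]
  ring_nf

lemma e_sum {α : Type*} (s : Finset α) (f : α → ℝ) : e (∑ a ∈ s, f a) = ∏ a ∈ s, e (f a) := by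
  simp only [e, ← Complex.exp_sum, Complex.ofReal_sum, mul_sum]

lemma e_natCast_mul (n : ℕ) (t : ℝ) : e (n * t) = e t ^ n := by
  simp only [e, ← Complex.exp_nat_mul, Complex.ofReal_mul, Complex.ofReal_natCast]; ring_nf

lemma norm_e (t : ℝ) : ‖e t‖ = 1 := by
  rw [e, show 2 * π * I * t = ((2 * π * t : ℝ) : ℂ) * I by push_cast; ring]
  exact Complex.norm_exp_ofReal_mul_I _

lemma norm_e_sub_one (t : ℝ) : ‖e t - 1‖ = 2 * |sin (π * t)| := by
  have h := Complex.norm_exp_I_mul_ofReal_sub_one (2 * π * t)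
  rw [show (2 * π * t) / 2 = π * t by ring, norm_mul, Real.norm_eq_abs, Real.norm_eq_abs,
    abs_two] at h
  rw [← h, e]; push_cast; ring_nf

lemma sin_pi_mul_le_abs_sin_pi_mul {ε t : ℝ} (hε : 0 ≤ ε) (ht : ε ≤ |t - round t|) :
    sin (π * ε) ≤ |sin (π * t)| := by
  have hθ := abs_sub_round t
  have hle : |π * (t - round t)| ≤ π := by
    rw [abs_mul, abs_of_pos pi_pos]; nlinarith [pi_pos]
  rw [show π * t = π * (t - round t) + (round t : ℤ) * π by ring, sin_add_int_mul_pi, abs_mul,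
    abs_neg_one_zpow, one_mul, abs_sin_eq_sin_abs_of_abs_le_pi hle, abs_mul, abs_of_pos pi_pos]
  exact sin_le_sin_of_le_of_le_pi_div_two (by nlinarith [pi_pos]) (by nlinarith [pi_pos])
    (by nlinarith [pi_pos])

lemma three_mul_le_sin_pi_mul {x : ℝ} (h₀ : 0 ≤ x) (h : x ≤ 1 / 6) : 3 * x ≤ sin (π * x) := by
  have := strictConcaveOn_sin_Icc.concaveOn.2 (⟨le_rfl, pi_pos.le⟩ : (0 : ℝ) ∈ Set.Icc 0 π)
    (⟨by positivity, by linarith [pi_pos]⟩ : π / 6 ∈ Set.Icc 0 π)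
    (by linarith : 0 ≤ 1 - 6 * x) (by linarith : 0 ≤ 6 * x) (by ring)
  simp only [smul_eq_mul, mul_zero, zero_add, sin_zero, sin_pi_div_six] at this
  rw [show 6 * x * (π / 6) = π * x by ring] at this
  linarith

noncomputable def expSum (m : ℕ) (t : ℝ) : ℂ := ∑ n ∈ range (m + 1), e (n * t)

lemma norm_expSum_le {t : ℝ} (ht : sin (π * t) ≠ 0) (m : ℕ) :
    ‖expSum m t‖ ≤ 1 / |sin (π * t)| := by
  have hpos : 0 < |sin (π * t)| := abs_pos.2 ht
  have hne : e t ≠ 1 := fun h => by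
    have := norm_e_sub_one t; rw [h, sub_self, norm_zero] at this; linarith
  have hgeom : expSum m t = (e t ^ (m + 1) - 1) / (e t - 1) := by
    simp only [expSum, e_natCast_mul, geom_sum_eq hne]
  have hnum : ‖e t ^ (m + 1) - 1‖ ≤ 2 := by
    have := norm_sub_le (e t ^ (m + 1)) 1
    rw [norm_pow, norm_e, one_pow, norm_one] at this
    linarith
  rw [hgeom, norm_div, norm_e_sub_one, div_le_div_iff₀ (by positivity) hpos]
  nlinarith

lemma normSq_expSum_le {ε t : ℝ} (hε : 0 < ε) (ht : ε ≤ |t - round t|) (m : ℕ) :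
    normSq (expSum m t) ≤ 1 / sin (π * ε) ^ 2 := by
  have hs : 0 < sin (π * ε) := sin_pos_of_pos_of_lt_pi (by positivity)
    (by nlinarith [pi_pos, abs_sub_round t])
  have hst := sin_pi_mul_le_abs_sin_pi_mul hε.le ht
  rw [Complex.normSq_eq_norm_sq, one_div, ← inv_pow]
  gcongr
  calc ‖expSum m t‖ ≤ 1 / |sin (π * t)| := norm_expSum_le (abs_pos.1 (hs.trans_le hst)) m
    _ ≤ (sin (π * ε))⁻¹ := by rw [one_div]; gcongr

def fejerCoeff (m : ℕ) (n : ℤ) : ℕ := m + 1 - n.natAbs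

lemma fejerCoeff_eq_zero {m : ℕ} {n : ℤ} (h : m < n.natAbs) : fejerCoeff m n = 0 := by
  unfold fejerCoeff; omega

lemma card_filter_sub_eq_fejerCoeff (m : ℕ) (n : ℤ) :
    #{p ∈ range (m + 1) ×ˢ range (m + 1) | (p.1 : ℤ) - p.2 = n} = fejerCoeff m n := by
  rw [fejerCoeff, ← card_range (m + 1 - n.natAbs)]
  refine card_nbij' (fun p => min p.1 p.2) (fun r => (r + n.toNat, r + (-n).toNat)) ?_ ?_ ?_ ?_
  all_goals
    intro p hp
    simp only [mem_coe, mem_filter, mem_product, mem_range] at hp ⊢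
  · omega
  · omega
  · ext <;> simp only <;> omega
  · omega

lemma normSq_expSum_eq {m N : ℕ} (hmN : m ≤ N) (t : ℝ) :
    (normSq (expSum m t) : ℂ) = ∑ n ∈ Icc (-(N : ℤ)) N, (fejerCoeff m n : ℂ) * e (n * t) := by
  rw [← Complex.mul_conj, expSum, map_sum, sum_mul_sum, ← sum_product',
    ← sum_fiberwise_of_maps_to (g := fun p : ℕ × ℕ => (p.1 : ℤ) - p.2) (t := Icc (-(N : ℤ)) N)
      (fun p hp => by simp only [mem_product, mem_range, mem_Icc] at hp ⊢; omega)]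
  refine sum_congr rfl fun n _ => ?_
  rw [← card_filter_sub_eq_fejerCoeff, ← nsmul_eq_mul, ← sum_const]
  refine sum_congr rfl fun p hp => ?_
  rw [← e_neg, ← e_add, ← (mem_filter.1 hp).2]
  push_cast; ring_nf

lemma sum_mul_sum_e_eq (a b : ℤ → ℂ) {A B N : ℕ} (hb : ∀ n : ℤ, B < n.natAbs → b n = 0)
    (hN : A + B ≤ N) (t : ℝ) :
    (∑ i ∈ Icc (-(A : ℤ)) A, a i * e (i * t)) * (∑ j ∈ Icc (-(B : ℤ)) B, b j * e (j * t)) =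
      ∑ n ∈ Icc (-(N : ℤ)) N, (∑ i ∈ Icc (-(A : ℤ)) A, a i * b (n - i)) * e (n * t) := by
  simp only [sum_mul (Icc (-(A : ℤ)) A), mul_sum (Icc (-(B : ℤ)) B)]
  conv_rhs => rw [sum_comm]
  refine sum_congr rfl fun i hi => ?_
  rw [mem_Icc] at hi
  have hshift : ∑ n ∈ Icc (-(N : ℤ)) N, a i * b (n - i) * e (n * t) =
      ∑ j ∈ Icc (-(N : ℤ) - i) (N - i), a i * b j * e ((j + i : ℤ) * t) :=
    sum_nbij' (· - i) (· + i) (fun n hn => by simp only [mem_Icc] at hn ⊢; omega)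
      (fun j hj => by simp only [mem_Icc] at hj ⊢; omega) (fun _ _ => by ring)
      (fun _ _ => by ring) (fun n _ => by simp)
  have hsub : Icc (-(B : ℤ)) B ⊆ Icc (-(N : ℤ) - i) (N - i) := fun j hj => by
    simp only [mem_Icc] at hj ⊢; omega
  rw [hshift, ← sum_subset hsub fun j _ hj => by
    rw [hb j (by simp only [mem_Icc] at hj; omega), mul_zero, zero_mul]]
  refine sum_congr rfl fun j _ => ?_
  rw [Int.cast_add, add_mul, e_add]; ring

noncomputable def fejerSqCoeff (m : ℕ) (n : ℤ) : ℕ :=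
  ∑ i ∈ Icc (-(m : ℤ)) m, fejerCoeff m i * fejerCoeff m (n - i)

lemma normSq_expSum_sq_eq {m N : ℕ} (hmN : 2 * m ≤ N) (t : ℝ) :
    ((normSq (expSum m t) ^ 2 : ℝ) : ℂ) =
      ∑ n ∈ Icc (-(N : ℤ)) N, (fejerSqCoeff m n : ℂ) * e (n * t) := by
  rw [Complex.ofReal_pow, sq, normSq_expSum_eq le_rfl,
    sum_mul_sum_e_eq (A := m) (B := m) (N := N) _ _
      (fun n hn => by rw [fejerCoeff_eq_zero hn, Nat.cast_zero]) (by omega)]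
  push_cast [fejerSqCoeff]
  rfl

lemma sum_Icc_succ {M : Type*} [AddCommMonoid M] (f : ℤ → M) (m : ℕ) :
    ∑ i ∈ Icc (-((m + 1 : ℕ) : ℤ)) (m + 1 : ℕ), f i =
      f (-(m + 1)) + f (m + 1) + ∑ i ∈ Icc (-(m : ℤ)) m, f i := by
  have h : Icc (-((m + 1 : ℕ) : ℤ)) (m + 1 : ℕ) =
      insert (-((m : ℤ) + 1)) (insert ((m : ℤ) + 1) (Icc (-(m : ℤ)) m)) := by
    ext i; simp only [mem_Icc, mem_insert]; omega
  rw [h, sum_insert (by simp only [mem_insert, mem_Icc]; omega),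
    sum_insert (by simp only [mem_Icc]; omega), add_assoc]

lemma card_Icc_neg (m : ℕ) : #(Icc (-(m : ℤ)) m) = 2 * m + 1 := by
  rw [Int.card_Icc]; omega

lemma fejerCoeff_succ_neg (m : ℕ) : fejerCoeff (m + 1) (-(m + 1)) = 1 := by
  unfold fejerCoeff; omega

lemma fejerCoeff_succ_self (m : ℕ) : fejerCoeff (m + 1) (m + 1) = 1 := by
  unfold fejerCoeff; omega

lemma fejerCoeff_succ {m : ℕ} {i : ℤ} (hi : i ∈ Icc (-(m : ℤ)) m) :
    fejerCoeff (m + 1) i = fejerCoeff m i + 1 := by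
  rw [mem_Icc] at hi; unfold fejerCoeff; omega

lemma sum_fejerCoeff (m : ℕ) : ∑ i ∈ Icc (-(m : ℤ)) m, fejerCoeff m i = (m + 1) ^ 2 := by
  induction m with
  | zero => simp [fejerCoeff]
  | succ m ih =>
    rw [sum_Icc_succ, fejerCoeff_succ_neg, fejerCoeff_succ_self,
      sum_congr rfl fun i hi => fejerCoeff_succ hi, sum_add_distrib, ih, sum_const,
      card_Icc_neg, smul_eq_mul]
    ring

lemma three_mul_sum_fejerCoeff_sq (m : ℕ) :
    3 * ∑ i ∈ Icc (-(m : ℤ)) m, fejerCoeff m i ^ 2 = (m + 1) * (2 * (m + 1) ^ 2 + 1) := by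
  induction m with
  | zero => simp [fejerCoeff]
  | succ m ih =>
    rw [sum_Icc_succ, sum_congr rfl fun i hi => by rw [fejerCoeff_succ hi, add_sq],
      sum_add_distrib, sum_add_distrib, ← sum_mul, ← mul_sum, sum_fejerCoeff, sum_const,
      card_Icc_neg, smul_eq_mul, fejerCoeff_succ_neg, fejerCoeff_succ_self]
    linear_combination ih

lemma fejerSqCoeff_zero (m : ℕ) :
    fejerSqCoeff m 0 = ∑ i ∈ Icc (-(m : ℤ)) m, fejerCoeff m i ^ 2 := by
  simp only [fejerSqCoeff, zero_sub, fejerCoeff, Int.natAbs_neg, sq]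

lemma three_mul_fejerSqCoeff_zero (m : ℕ) :
    3 * (fejerSqCoeff m 0 : ℝ) = (m + 1) * (2 * (m + 1) ^ 2 + 1) := by
  exact_mod_cast fejerSqCoeff_zero m ▸ three_mul_sum_fejerCoeff_sq m

lemma fejerSqCoeff_le_zero (m : ℕ) (n : ℤ) : fejerSqCoeff m n ≤ fejerSqCoeff m 0 := by
  rw [fejerSqCoeff_zero, fejerSqCoeff]
  set S := Icc (-(m : ℤ)) m
  have hshift : ∑ i ∈ S, fejerCoeff m (n - i) ^ 2 ≤ ∑ j ∈ S, fejerCoeff m j ^ 2 := by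
    rw [← sum_image (f := fun j => fejerCoeff m j ^ 2) (g := (n - ·))
      fun _ _ _ _ h => sub_right_injective h]
    refine sum_le_sum_of_ne_zero fun j _ hj => ?_
    by_contra hjS
    rw [fejerCoeff_eq_zero (by simp only [S, mem_Icc] at hjS; omega), zero_pow two_ne_zero] at hj
    exact hj rfl
  have hAMGM : ∀ i ∈ S, 2 * (fejerCoeff m i * fejerCoeff m (n - i)) ≤
      fejerCoeff m i ^ 2 + fejerCoeff m (n - i) ^ 2 := fun i _ => by
    rw [← mul_assoc]; exact two_mul_le_add_sq _ _
  have := sum_le_sum hAMGM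
  rw [← mul_sum, sum_add_distrib] at this
  omega

/-- Sharp for `l = 1` as `ε ↓ 1/4`, so `sin (π * ε)` is bounded below separately on `(0, 1/6]`,
`(1/6, 1/4]` and `(1/4, 1/2]`. -/
lemma nine_mul_le {l μ : ℕ} {ε : ℝ} (hε : 0 < ε) (hε2 : ε ≤ 1 / 2) (hμ : (l : ℝ) < 2 * ε * μ) :
    9 * l ≤ 2 * (2 * μ ^ 2 + 1) * sin (π * ε) ^ 2 := by
  have hsin_mono : ∀ a, 0 ≤ a → a ≤ ε → sin (π * a) ≤ sin (π * ε) := fun a ha haε =>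
    sin_le_sin_of_le_of_le_pi_div_two (by nlinarith [pi_pos]) (by nlinarith [pi_pos])
      (by nlinarith [pi_pos])
  have hl0 : (0 : ℝ) ≤ l := l.cast_nonneg
  have hl : l = 0 ∨ (1 : ℝ) ≤ l := by
    rcases Nat.eq_zero_or_pos l with h | h
    exacts [.inl h, .inr (by exact_mod_cast h)]
  rcases le_or_gt ε (1 / 6) with h6 | h6
  · have hs := three_mul_le_sin_pi_mul hε.le h6
    have : 3 * (l : ℝ) < 2 * μ * sin (π * ε) := by nlinarith [(μ.cast_nonneg : (0 : ℝ) ≤ μ)]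
    rcases hl with hl | hl
    · simp only [hl, CharP.cast_eq_zero, mul_zero]; positivity
    · nlinarith [sq_nonneg (sin (π * ε))]
  rcases le_or_gt ε (1 / 4) with h4 | h4
  · have hs : 1 / 2 ≤ sin (π * ε) := by
      have := hsin_mono (1 / 6) (by norm_num) h6.le
      rwa [show π * (1 / 6) = π / 6 by ring, sin_pi_div_six] at this
    have hμl : (2 * l + 1 : ℝ) ≤ μ := by
      have : 2 * l < μ := by exact_mod_cast (show (2 * l : ℝ) < μ by nlinarith)
      exact_mod_cast this
    calc (9 * l : ℝ) ≤ 2 * (2 * (2 * l + 1) ^ 2 + 1) * (1 / 2) ^ 2 := by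
          rcases hl with hl | hl
          · norm_num [hl]
          · nlinarith
      _ ≤ 2 * (2 * μ ^ 2 + 1) * sin (π * ε) ^ 2 := by gcongr
  · have hs : √2 / 2 ≤ sin (π * ε) := by
      have := hsin_mono (1 / 4) (by norm_num) h4.le
      rwa [show π * (1 / 4) = π / 4 by ring, sin_pi_div_four] at this
    have hμl : (l + 1 : ℝ) ≤ μ := by
      have : l < μ := by exact_mod_cast (show (l : ℝ) < μ by nlinarith)
      exact_mod_cast this
    calc (9 * l : ℝ) ≤ 2 * (2 * (l + 1) ^ 2 + 1) * (√2 / 2) ^ 2 := by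
          rw [div_pow, Real.sq_sqrt zero_le_two]
          rcases Nat.lt_or_ge l 2 with h | h
          · interval_cases l <;> norm_num
          · nlinarith [(Nat.ofNat_le_cast (α := ℝ)).2 h]
      _ ≤ 2 * (2 * μ ^ 2 + 1) * sin (π * ε) ^ 2 := by gcongr

lemma lt_two_mul_mul_floor_div_two_succ (l : ℕ) {ε : ℝ} (hε : 0 < ε) :
    (l : ℝ) < 2 * ε * ((⌊(l : ℝ) / ε⌋.toNat / 2 + 1 : ℕ) : ℝ) := by
  set J := ⌊(l : ℝ) / ε⌋.toNat
  have hJ : (J : ℝ) = ⌊(l : ℝ) / ε⌋ := by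
    exact_mod_cast Int.toNat_of_nonneg (Int.floor_nonneg.2 (by positivity))
  have hlt : (l : ℝ) / ε < J + 1 := hJ ▸ Int.lt_floor_add_one _
  have hJ2 : (J + 1 : ℝ) ≤ 2 * ((J / 2 + 1 : ℕ) : ℝ) := by
    exact_mod_cast (by omega : J + 1 ≤ 2 * (J / 2 + 1))
  rw [div_lt_iff₀ hε] at hlt
  nlinarith

lemma mul_succ_div_sin_sq_le {l m : ℕ} {ε : ℝ} (hε : 0 < ε) (hε2 : ε ≤ 1 / 2)
    (hm : (l : ℝ) < 2 * ε * (m + 1 : ℕ)) :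
    l * (m + 1) / sin (π * ε) ^ 2 ≤ 2 / 3 * fejerSqCoeff m 0 := by
  have h9 := nine_mul_le hε hε2 hm
  have hs : 0 < sin (π * ε) := sin_pos_of_pos_of_lt_pi (by positivity) (by nlinarith [pi_pos])
  have hQ := three_mul_fejerSqCoeff_zero m
  rw [div_le_iff₀ (by positivity)]
  push_cast at h9
  nlinarith [mul_le_mul_of_nonneg_left h9 (by positivity : (0 : ℝ) ≤ m + 1)]

lemma mul_le_sum_norm_erase_of_re_sum_nonpos {α : Type*} [DecidableEq α] {S : Finset α} {γ₀ : α}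
    (h₀ : γ₀ ∈ S) {W : α → ℝ} {Z : α → ℂ} {M c z : ℝ} (hM : 0 < M) (hz : 0 ≤ z)
    (hZ₀ : Z γ₀ = z) (hW : ∀ γ ∈ S, |W γ| ≤ M) (hW₀ : c * M ≤ W γ₀)
    (hre : (∑ γ ∈ S, (W γ : ℂ) * Z γ).re ≤ 0) :
    c * z ≤ ∑ γ ∈ S.erase γ₀, ‖Z γ‖ := by
  rw [← add_sum_erase S _ h₀, hZ₀, Complex.add_re, ← Complex.ofReal_mul, Complex.ofReal_re]
    at hre
  have htail : -(∑ γ ∈ S.erase γ₀, (W γ : ℂ) * Z γ).re ≤ M * ∑ γ ∈ S.erase γ₀, ‖Z γ‖ := by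
    refine (neg_le_abs _).trans <| (Complex.abs_re_le_norm _).trans <|
      (norm_sum_le _ _).trans ?_
    rw [mul_sum]
    refine sum_le_sum fun γ hγ => ?_
    rw [norm_mul, Complex.norm_real, Real.norm_eq_abs]
    exact mul_le_mul_of_nonneg_right (hW γ (mem_of_mem_erase hγ)) (norm_nonneg _)
  have : M * (c * z) ≤ M * ∑ γ ∈ S.erase γ₀, ‖Z γ‖ := by nlinarith
  exact le_of_mul_le_mul_left this hM

lemma mul_card_mul_pow_pred_le {n : ℕ} {B v Q : ℝ} (hQ : 0 ≤ Q) (h : B * n * v ≤ 2 / 3 * Q) :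
    B * (n * (v * Q ^ (n - 1))) ≤ 2 / 3 * Q ^ n := by
  rcases n with _ | n
  · simp only [CharP.cast_eq_zero, zero_mul, mul_zero, pow_zero]; norm_num
  · rw [Nat.add_sub_cancel, pow_succ']
    have := mul_le_mul_of_nonneg_right h (pow_nonneg hQ n)
    linarith

section Kernel

variable {ι : Type*} [Fintype ι] [DecidableEq ι]

lemma prod_ite_eq_mul_prod_erase {M : Type*} [CommMonoid M] (u v : ι → M) (i : ι) :
    ∏ j, (if j = i then v j else u j) = v i * ∏ j ∈ univ.erase i, u j := by
  rw [← mul_prod_erase univ _ (mem_univ i), if_pos rfl,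
    prod_congr rfl fun j hj => if_neg (ne_of_mem_erase hj)]

lemma prod_sum_e_eq (S : Finset ℤ) (c : ι → ℤ → ℂ) (x : ι → ℝ) :
    ∏ j, ∑ n ∈ S, c j n * e (n * x j) =
      ∑ γ ∈ Fintype.piFinset fun _ => S, (∏ j, c j (γ j)) * e (∑ j, γ j * x j) := by
  rw [prod_univ_sum]
  exact sum_congr rfl fun γ _ => by rw [prod_mul_distrib, e_sum]

def kernelForm (B : ℝ) (u v : ι → ℝ) : ℝ :=
  ∏ j, u j - B * ∑ i, ∏ j, if j = i then v j else u j

lemma kernelForm_sq_nonpos {B : ℝ} {v : ι → ℝ} (hv : ∀ j, 0 ≤ v j) {i : ι} (hi : v i ≤ B) :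
    kernelForm B (fun j => v j ^ 2) v ≤ 0 := by
  set R := ∏ j ∈ univ.erase i, v j ^ 2
  have hR : 0 ≤ R := prod_nonneg fun j _ => sq_nonneg _
  have hprod : ∏ j, v j ^ 2 = v i * (v i * R) := by
    rw [← mul_prod_erase univ _ (mem_univ i)]; ring
  have hterm : v i * R ≤ ∑ i', ∏ j, if j = i' then v j else v j ^ 2 := by
    rw [← prod_ite_eq_mul_prod_erase]
    exact single_le_sum (f := fun i' => ∏ j, if j = i' then v j else v j ^ 2)
      (fun i' _ => prod_nonneg fun j _ => by split_ifs; exacts [hv j, sq_nonneg _]) (mem_univ i)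
  rw [kernelForm, hprod, sub_nonpos]
  calc v i * (v i * R) ≤ B * (v i * R) := by gcongr; exact mul_nonneg (hv i) hR
    _ ≤ _ := by gcongr; exact (hv i).trans hi

lemma sum_prod_ite_const {R : Type*} [CommSemiring R] (u₀ v₀ : R) :
    ∑ i : ι, ∏ j, (if j = i then v₀ else u₀) =
      Fintype.card ι * (v₀ * u₀ ^ (Fintype.card ι - 1)) := by
  simp only [prod_ite_eq_mul_prod_erase, prod_const, card_erase_of_mem (mem_univ _), card_univ,
    sum_const, nsmul_eq_mul]

lemma kernelForm_const (B u₀ v₀ : ℝ) :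
    kernelForm B (fun _ : ι => u₀) (fun _ => v₀) =
      u₀ ^ Fintype.card ι - B * (Fintype.card ι * (v₀ * u₀ ^ (Fintype.card ι - 1))) := by
  rw [kernelForm, sum_prod_ite_const, prod_const, card_univ]

lemma abs_kernelForm_le {B u₀ v₀ : ℝ} {u v : ι → ℝ} (hB : 0 ≤ B)
    (hu : ∀ j, 0 ≤ u j ∧ u j ≤ u₀) (hv : ∀ j, 0 ≤ v j ∧ v j ≤ v₀) :
    |kernelForm B u v| ≤
      max (u₀ ^ Fintype.card ι) (B * (Fintype.card ι * (v₀ * u₀ ^ (Fintype.card ι - 1)))) := by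
  have hite : ∀ i j, 0 ≤ (if j = i then v j else u j) ∧
      (if j = i then v j else u j) ≤ if j = i then v₀ else u₀ := fun i j => by
    split_ifs; exacts [hv j, hu j]
  have h₁ : ∏ j, u j ≤ u₀ ^ Fintype.card ι := by
    rw [← card_univ, ← prod_const]
    exact prod_le_prod (fun j _ => (hu j).1) fun j _ => (hu j).2
  have h₂ : ∑ i, ∏ j, (if j = i then v j else u j) ≤
      Fintype.card ι * (v₀ * u₀ ^ (Fintype.card ι - 1)) := by
    rw [← sum_prod_ite_const]
    exact sum_le_sum fun i _ => prod_le_prod (fun j _ => (hite i j).1) fun j _ => (hite i j).2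
  have h₀₁ : 0 ≤ ∏ j, u j := prod_nonneg fun j _ => (hu j).1
  have h₀₂ : 0 ≤ B * ∑ i, ∏ j, (if j = i then v j else u j) :=
    mul_nonneg hB (sum_nonneg fun i _ => prod_nonneg fun j _ => (hite i j).1)
  have h₂' := mul_le_mul_of_nonneg_left h₂ hB
  rw [kernelForm, abs_sub_le_iff]
  constructor
  · exact (by linarith : _ ≤ u₀ ^ Fintype.card ι).trans (le_max_left _ _)
  · exact (by linarith : _ ≤ B * _).trans (le_max_right _ _)

lemma kernelForm_eq_sum_e (B : ℝ) (S : Finset ℤ) (x : ι → ℝ) {u v : ι → ℝ} {a b : ℤ → ℝ}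
    (hu : ∀ j, (u j : ℂ) = ∑ n ∈ S, (a n : ℂ) * e (n * x j))
    (hv : ∀ j, (v j : ℂ) = ∑ n ∈ S, (b n : ℂ) * e (n * x j)) :
    (kernelForm B u v : ℂ) = ∑ γ ∈ Fintype.piFinset fun _ => S,
      (kernelForm B (fun j => a (γ j)) (fun j => b (γ j)) : ℂ) * e (∑ j, γ j * x j) := by
  have hu' : ((∏ j, u j : ℝ) : ℂ) = ∑ γ ∈ Fintype.piFinset fun _ => S,
      ((∏ j, a (γ j) : ℝ) : ℂ) * e (∑ j, γ j * x j) := by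
    simp only [Complex.ofReal_prod, hu, prod_sum_e_eq]
  have hite : ∀ i, ((∏ j, if j = i then v j else u j : ℝ) : ℂ) = ∑ γ ∈ Fintype.piFinset fun _ => S,
      ((∏ j, if j = i then b (γ j) else a (γ j) : ℝ) : ℂ) * e (∑ j, γ j * x j) := fun i => by
    have hj : ∀ j, ((if j = i then v j else u j : ℝ) : ℂ) =
        ∑ n ∈ S, ((if j = i then b n else a n : ℝ) : ℂ) * e (n * x j) := fun j => by
      split_ifs; exacts [hv j, hu j]
    simp only [Complex.ofReal_prod, hj, prod_sum_e_eq]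
  simp only [kernelForm, Complex.ofReal_sub, Complex.ofReal_mul, Complex.ofReal_sum, hu', hite,
    sub_mul, sum_sub_distrib, sum_mul, mul_sum, mul_assoc]
  rw [sum_comm]

noncomputable def kernel (m : ℕ) (B : ℝ) (x : ι → ℝ) : ℝ :=
  kernelForm B (fun j => normSq (expSum m (x j)) ^ 2) fun j => normSq (expSum m (x j))

noncomputable def kernelCoeff (m : ℕ) (B : ℝ) (γ : ι → ℤ) : ℝ :=
  kernelForm B (fun j => (fejerSqCoeff m (γ j) : ℝ)) fun j => (fejerCoeff m (γ j) : ℝ)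

lemma kernel_nonpos {ε : ℝ} (hε : 0 < ε) (m : ℕ) {x : ι → ℝ}
    (hx : ∃ j, ε ≤ |x j - round (x j)|) : kernel m (1 / sin (π * ε) ^ 2) x ≤ 0 := by
  obtain ⟨j, hj⟩ := hx
  exact kernelForm_sq_nonpos (fun _ => Complex.normSq_nonneg _) (normSq_expSum_le hε hj m)

lemma kernel_eq_sum {m J : ℕ} (hmJ : 2 * m ≤ J) (B : ℝ) (x : ι → ℝ) :
    (kernel m B x : ℂ) = ∑ γ ∈ Fintype.piFinset fun _ => Icc (-(J : ℤ)) J,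
      (kernelCoeff m B γ : ℂ) * e (∑ j, γ j * x j) := by
  unfold kernel kernelCoeff
  refine kernelForm_eq_sum_e (a := fun n => (fejerSqCoeff m n : ℝ))
    (b := fun n => (fejerCoeff m n : ℝ)) B _ x (fun j => ?_) (fun j => ?_)
  · rw [normSq_expSum_sq_eq hmJ]; simp only [Complex.ofReal_natCast]
  · rw [normSq_expSum_eq (N := J) (by omega)]; simp only [Complex.ofReal_natCast]

lemma abs_kernelCoeff_le {m : ℕ} {B : ℝ} (hB₀ : 0 ≤ B)
    (hB : B * Fintype.card ι * (m + 1) ≤ 2 / 3 * fejerSqCoeff m 0) (γ : ι → ℤ) :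
    |kernelCoeff m B γ| ≤ (fejerSqCoeff m 0 : ℝ) ^ Fintype.card ι := by
  unfold kernelCoeff
  refine (abs_kernelForm_le (ι := ι) hB₀ (fun j => ⟨by positivity, ?_⟩)
    (fun j => ⟨by positivity, ?_⟩)).trans (max_le le_rfl ((mul_card_mul_pow_pred_le (by positivity) hB).trans ?_))
  · exact_mod_cast fejerSqCoeff_le_zero m (γ j)
  · exact_mod_cast (Nat.sub_le _ _ : fejerCoeff m (γ j) ≤ m + 1)
  · linarith [pow_nonneg (Nat.cast_nonneg (α := ℝ) (fejerSqCoeff m 0)) (Fintype.card ι)]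

lemma div_three_le_kernelCoeff_zero {m : ℕ} {B : ℝ}
    (hB : B * Fintype.card ι * (m + 1) ≤ 2 / 3 * fejerSqCoeff m 0) :
    (fejerSqCoeff m 0 : ℝ) ^ Fintype.card ι / 3 ≤ kernelCoeff m B (0 : ι → ℤ) := by
  have hw : fejerCoeff m 0 = m + 1 := by simp [fejerCoeff]
  have := mul_card_mul_pow_pred_le (Nat.cast_nonneg (fejerSqCoeff m 0)) hB
  simp only [kernelCoeff, Pi.zero_apply, hw, Nat.cast_add, Nat.cast_one, kernelForm_const]
  linarith

end Kernel

theorem div_three_le_sum_norm {ι κ : Type*} [Fintype ι] [DecidableEq ι] [Fintype κ] {ε : ℝ}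
    (hε : 0 < ε) {m J : ℕ} (hmJ : 2 * m ≤ J)
    (hB : Fintype.card ι * (m + 1) / sin (π * ε) ^ 2 ≤ 2 / 3 * fejerSqCoeff m 0)
    (ξ : κ → ι → ℝ) (hξ : ∀ i, ∃ j, ε ≤ |ξ i j - round (ξ i j)|) :
    (Fintype.card κ : ℝ) / 3 ≤ ∑ γ ∈ (Fintype.piFinset fun _ : ι => Icc (-(J : ℤ)) J).erase 0,
      ‖∑ i, e (∑ j, γ j * ξ i j)‖ := by
  set B := 1 / sin (π * ε) ^ 2
  have hB' : B * Fintype.card ι * (m + 1) ≤ 2 / 3 * fejerSqCoeff m 0 := by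
    convert hB using 1; ring
  have hsum : ∑ i, (kernel m B (ξ i) : ℂ) = ∑ γ ∈ Fintype.piFinset fun _ => Icc (-(J : ℤ)) J,
      (kernelCoeff m B γ : ℂ) * ∑ i, e (∑ j, γ j * ξ i j) := by
    simp only [kernel_eq_sum hmJ, mul_sum]
    exact sum_comm
  have hre : (∑ i, (kernel m B (ξ i) : ℂ)).re ≤ 0 := by
    rw [← Complex.ofReal_sum, Complex.ofReal_re]
    exact sum_nonpos fun i _ => kernel_nonpos hε m (hξ i)
  rw [hsum] at hre
  have hQ : (0 : ℝ) < fejerSqCoeff m 0 := by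
    have := three_mul_fejerSqCoeff_zero m; nlinarith [(m.cast_nonneg : (0 : ℝ) ≤ m)]
  have := mul_le_sum_norm_erase_of_re_sum_nonpos (γ₀ := 0) (c := 1 / 3) (z := Fintype.card κ)
    (Fintype.mem_piFinset.2 fun j => by simp) (by positivity) (by positivity) (by simp [e_zero])
    (fun γ _ => abs_kernelCoeff_le (by positivity) hB' γ)
    (by linarith [div_three_le_kernelCoeff_zero (ι := ι) hB']) hre
  linarith

end BartonMontgomeryVaaler

theorem statement10_general (l k : ℕ) (ε : ℝ) (hε : 0 < ε) (hε2 : ε ≤ 1 / 2)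
    (ξ : Fin k → (Fin l → ℝ))
    (hξ : ∀ i : Fin k, ∀ v : Fin l → ℤ, ∃ j : Fin l, ε ≤ |ξ i j - (v j : ℝ)|) :
    (k : ℝ) / 3 ≤
      ∑ m ∈ freqBox l (⌊(l : ℝ) / ε⌋.toNat),
        ‖∑ i : Fin k,
            Complex.exp (2 * Real.pi * Complex.I * ((∑ j, (m j : ℝ) * ξ i j) : ℝ))‖ := by
  set J := ⌊(l : ℝ) / ε⌋.toNat
  have hbox : freqBox l J =
      (Fintype.piFinset fun _ : Fin l => Finset.Icc (-(J : ℤ)) J).erase 0 := by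
    rw [freqBox, Pi.Icc_eq, Finset.filter_ne']
  have hB := BartonMontgomeryVaaler.mul_succ_div_sin_sq_le hε hε2
    (BartonMontgomeryVaaler.lt_two_mul_mul_floor_div_two_succ l hε)
  have := BartonMontgomeryVaaler.div_three_le_sum_norm hε (by omega : 2 * (J / 2) ≤ J)
    (by simpa using hB) ξ fun i => hξ i fun j => round (ξ i j)
  rw [Fintype.card_fin] at this
  rw [hbox]
  exact this

/-- **Lemma 1 (Barton–Montgomery–Vaaler).** If `ξ₁, …, ξ_k ∈ ℝ^ℓ` all have sup-norm
distance at least `ε` from the lattice `ℤ^ℓ`, then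
`k/3 ≤ ∑_{0 < ‖m‖_∞ ≤ ⌊ℓ/ε⌋} |∑_i exp(2πi m·ξᵢ)|`. -/
theorem statement10 (l k : ℕ) (hl : 0 < l) (ε : ℝ) (hε : 0 < ε) (hε2 : ε ≤ 1 / 2)
    (ξ : Fin k → (Fin l → ℝ))
    (hξ : ∀ i : Fin k, ∀ v : Fin l → ℤ, ∃ j : Fin l, ε ≤ |ξ i j - (v j : ℝ)|) :
    (k : ℝ) / 3 ≤
      ∑ m ∈ freqBox l (⌊(l : ℝ) / ε⌋.toNat),
        ‖∑ i : Fin k,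
            Complex.exp (2 * Real.pi * Complex.I * ((∑ j, (m j : ℝ) * ξ i j) : ℝ))‖ :=
  statement10_general l k ε hε hε2 ξ hξ
end

section
/- Let ε > 0, b ∈ ℝ^L, V a proper linear subspace of ℝ^L, and v ∈ ℤ^L a vector not belonging to the orthogonal complement V^⊥. Let S = {b + x + ℤ^L : x ∈ V} ⊂ 𝕋^L and suppose X ⊆ S is ε-dense in S, meaning: for every s ∈ S there exist x ∈ X ∩ S and w ∈ ℤ^L such that ‖x − s − w‖_∞ ≤ ε (for representatives in ℝ^L). Then the set {v·x + ℤ : x ∈ X} ⊂ 𝕋 is (L‖v‖_∞ ε)-dense in 𝕋, i.e. for every t ∈ 𝕋 some element of this set is within distance L‖v‖_∞ ε of t on ℝ/ℤ. -/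
/-!
Because `v` is not orthogonal to `V`, the functional `y ↦ v·y` maps `b + V` onto `ℝ`, so every
`t ∈ 𝕋` is `v·s` for some `s ∈ S`. Replacing `s` by an `x ∈ X` that is coordinatewise `ε`-close
moves `v·x` by at most `∑ |v_i| ε ≤ L ‖v‖_∞ ε`.
-/

open scoped BigOperators
open Matrix

theorem Matrix.exists_mem_dotProduct_add_eq {K ι : Type*} [Field K] [Fintype ι] {u : ι → K}
    {V : Submodule K (ι → K)} (hu : ∃ x ∈ V, u ⬝ᵥ x ≠ 0) (b : ι → K) (r : K) :
    ∃ x ∈ V, u ⬝ᵥ (b + x) = r := by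
  obtain ⟨x, hxV, hx⟩ := hu
  refine ⟨((r - u ⬝ᵥ b) / u ⬝ᵥ x) • x, V.smul_mem _ hxV, ?_⟩
  rw [dotProduct_add, dotProduct_smul, smul_eq_mul, div_mul_cancel₀ _ hx, add_sub_cancel]

theorem AddCircle.coe_sum_intCast_mul {ι : Type*} (s : Finset ι) (p : ℝ) (v : ι → ℤ)
    (y : ι → ℝ) :
    ((∑ i ∈ s, (v i : ℝ) * y i : ℝ) : AddCircle p) = ∑ i ∈ s, v i • (y i : AddCircle p) := by
  simp [← zsmul_eq_mul]

theorem dist_sum_zsmul_le {ι E : Type*} [SeminormedAddCommGroup E] (s : Finset ι) (v : ι → ℤ)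
    (x y : ι → E) :
    dist (∑ i ∈ s, v i • x i) (∑ i ∈ s, v i • y i) ≤ ∑ i ∈ s, ‖v i‖ * dist (x i) (y i) := by
  refine (dist_sum_sum_le s _ _).trans (Finset.sum_le_sum fun i _ => ?_)
  rw [dist_eq_norm, dist_eq_norm, ← zsmul_sub]
  exact norm_zsmul_le _ _

theorem Int.norm_le_sup_natAbs {ι : Type*} [Fintype ι] (v : ι → ℤ) (i : ι) :
    ‖v i‖ ≤ ((Finset.univ.sup fun i => (v i).natAbs : ℕ) : ℝ) := by
  rw [Int.norm_eq_abs, ← Int.cast_abs, ← Nat.cast_natAbs]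
  exact_mod_cast Finset.le_sup (f := fun i => (v i).natAbs) (Finset.mem_univ i)

theorem statement12_general (L : ℕ) (ε : ℝ) (b : Fin L → ℝ)
    (V : Submodule ℝ (Fin L → ℝ)) (v : Fin L → ℤ)
    (hv : ¬ ∀ x ∈ V, (∑ i, (v i : ℝ) * x i) = 0)
    (S : Set (Fin L → Torus1))
    (hS : S = (fun y : Fin L → ℝ => fun i => ((y i : ℝ) : Torus1)) ''
      {y : Fin L → ℝ | ∃ x ∈ V, y = b + x})
    (X : Set (Fin L → Torus1))
    (hdense : ∀ s ∈ S, ∃ x ∈ X, ∀ i, dist (x i) (s i) ≤ ε) :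
    ∀ t : Torus1, ∃ x ∈ X,
      dist (∑ i, v i • x i) t ≤
        (L : ℝ) * ((Finset.univ.sup fun i => (v i).natAbs : ℕ) : ℝ) * ε := by
  intro t
  obtain ⟨r, rfl⟩ := QuotientAddGroup.mk_surjective t
  push Not at hv
  obtain ⟨x, hxV, hx⟩ := Matrix.exists_mem_dotProduct_add_eq hv b r
  obtain ⟨z, hzX, hz⟩ := hdense (fun i => ((b + x) i : Torus1)) (hS ▸ ⟨b + x, ⟨x, hxV, rfl⟩, rfl⟩)
  refine ⟨z, hzX, ?_⟩
  calc dist (∑ i, v i • z i) (r : Torus1)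
      = dist (∑ i, v i • z i) (∑ i, v i • ((b + x) i : Torus1)) := by
        rw [← hx, dotProduct, AddCircle.coe_sum_intCast_mul]
    _ ≤ ∑ i, ‖v i‖ * dist (z i) ((b + x) i : Torus1) := dist_sum_zsmul_le _ _ _ _
    _ ≤ ∑ _i : Fin L, ((Finset.univ.sup fun i => (v i).natAbs : ℕ) : ℝ) * ε := by
        gcongr with i
        · exact Int.norm_le_sup_natAbs v i
        · exact hz i
    _ = _ := by rw [Finset.sum_const, Finset.card_univ, Fintype.card_fin, nsmul_eq_mul, mul_assoc]

/-- **Lemma 3.** Let `S ⊆ 𝕋^L` be the projection of the affine subspace `b + V`, with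
`V ⊊ ℝ^L`, and let `v ∈ ℤ^L` not be orthogonal to `V`. If `X ⊆ S` is `ε`-dense in `S`,
then `{v·x : x ∈ X} ⊆ 𝕋` is `(L ‖v‖_∞ ε)`-dense in `𝕋`. -/
theorem statement12 (L : ℕ) (hL : 0 < L) (ε : ℝ) (hε : 0 < ε) (b : Fin L → ℝ)
    (V : Submodule ℝ (Fin L → ℝ)) (hV : V ≠ ⊤) (v : Fin L → ℤ)
    (hv : ¬ ∀ x ∈ V, (∑ i, (v i : ℝ) * x i) = 0)
    (S : Set (Fin L → Torus1))
    (hS : S = (fun y : Fin L → ℝ => fun i => ((y i : ℝ) : Torus1)) ''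
      {y : Fin L → ℝ | ∃ x ∈ V, y = b + x})
    (X : Set (Fin L → Torus1)) (hXS : X ⊆ S)
    (hdense : ∀ s ∈ S, ∃ x ∈ X, ∀ i, dist (x i) (s i) ≤ ε) :
    ∀ t : Torus1, ∃ x ∈ X,
      dist (∑ i, v i • x i) t ≤
        (L : ℝ) * ((Finset.univ.sup fun i => (v i).natAbs : ℕ) : ℝ) * ε :=
  statement12_general L ε b V v hv S hS X hdense
end

section
/- Let A(x) ∈ M_{L×N}(ℤ[x]) with A(x) = A_0 + xA_1 + ⋯ + x^D A_D, suppose the ℚ-vector space spanned by the rows of the non-constant part A_*(x) = xA_1 + ⋯ + x^D A_D has dimension ℓ, and suppose A satisfies condition (b): for all v ∈ ℚ^L and w ∈ ℚ^N, if v·A_d w = 0 for every d = 1, …, D then v·A_0 w = 0. Then there exist matrices T ∈ M_{L×ℓ}(ℚ) and B(x) ∈ M_{ℓ×N}(ℤ[x]) such that: (i) A(x) = T·B(x); (ii) the rows of B_*(x) are ℚ-linearly independent (B_* has full rank ℓ); and (iii) there is a positive integer q such that qT has integer entries and ‖qT‖_∞ ≤ C(ℓ) · ‖A_*‖_∞^ℓ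 for a constant C(ℓ) depending only on ℓ. -/
open scoped BigOperators
open Matrix

/-- The rows of the non-constant part `A_*(x)`, viewed as rational vectors obtained by
concatenating the coefficient matrices `A 1, …, A D` (row `i` is the row `i` of
`[A 1 ⋯ A D]`). -/
def starRows {L N D : ℕ} (A : Fin (D + 1) → Matrix (Fin L) (Fin N) ℤ) :
    Fin L → (Fin D × Fin N → ℚ) :=
  fun i p => ((A p.1.succ i p.2 : ℤ) : ℚ)

/-!
Choose `ℓ` rows of `A_*` forming a basis of its row space, and then `ℓ` columns on which these
rows have an invertible integer minor `S`. Every row of `A_*` is a combination of the chosen rows,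
and restricting to the chosen columns forces the coefficient matrix to be `T = R S⁻¹`, where `R`
collects the chosen columns of all rows of `A_*`; `B` consists of the chosen rows of `A`.
Condition (b) says that every left annihilator of `A_1, …, A_D` also annihilates `A_0`, which
extends `A_d = T B_d` from `d ≥ 1` to `d = 0`. By Cramer's rule the entries of `(det S) T` are
`ℓ × ℓ` minors of `A_*`, hence integers of size at most `ℓ! ‖A_*‖_∞^ℓ`; take `q = |det S|`.
-/

lemma exists_linearIndependent_comp_fin (K : Type*) [DivisionRing K] {η V : Type*} [Finite η]
    [AddCommGroup V] [Module K V] (f : η → V) {n : ℕ}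
    (hn : Module.finrank K (Submodule.span K (Set.range f)) = n) :
    ∃ s : Fin n → η, LinearIndependent K (f ∘ s) ∧
      Submodule.span K (Set.range (f ∘ s)) = Submodule.span K (Set.range f) := by
  obtain ⟨κ, a, ha, hspan, hli⟩ := exists_linearIndependent' K f
  have : Finite κ := Finite.of_injective a ha
  have : Fintype κ := Fintype.ofFinite κ
  have hcard : Fintype.card κ = n := by rw [← finrank_span_eq_card hli, hspan, hn]
  let e : Fin n ≃ κ := (Fintype.equivFinOfCardEq hcard).symm
  refine ⟨a ∘ e, hli.comp e e.injective, ?_⟩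
  rw [← hspan, ← Function.comp_assoc, EquivLike.range_comp]

namespace Matrix

variable {K : Type*} [Field K]

lemma exists_det_submatrix_ne_zero {n : ℕ} {ι : Type*} [Fintype ι] {M : Matrix (Fin n) ι K}
    (hM : LinearIndependent K M.row) : ∃ p : Fin n → ι, (M.submatrix id p).det ≠ 0 := by
  have hcols : Module.finrank K (Submodule.span K (Set.range M.col)) = n := by
    rw [← rank_eq_finrank_span_cols, hM.rank_matrix, Fintype.card_fin]
  obtain ⟨p, hp, -⟩ := exists_linearIndependent_comp_fin K M.col hcols
  exact ⟨p, ((isUnit_iff_isUnit_det _).mp (linearIndependent_cols_iff_isUnit.mp hp)).ne_zero⟩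

lemma eq_mul_inv_mul_submatrix {m κ n : Type*} [Fintype n] [DecidableEq n]
    (R : Matrix m κ K) (s : n → m) (p : n → κ)
    (hs : ∀ i, R i ∈ Submodule.span K (Set.range fun k => R (s k)))
    (hp : (R.submatrix s p).det ≠ 0) :
    R = (R.submatrix id p * (R.submatrix s p)⁻¹) * R.submatrix s id := by
  choose C hC using fun i => (Submodule.mem_span_range_iff_exists_fun K).mp (hs i)
  have hR : R = of C * R.submatrix s id := by
    ext i j
    simpa [mul_apply] using (congrFun (hC i) j).symm
  have hRp : R.submatrix id p = of C * R.submatrix s p := by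
    conv_lhs => rw [hR]
    rfl
  rw [hRp, mul_nonsing_inv_cancel_right _ _ (isUnit_iff_ne_zero.mpr hp)]
  exact hR

lemma det_mul_mul_inv_apply {m n : Type*} [Fintype n] [DecidableEq n] {α : Type*} [CommRing α]
    (R : Matrix m n α) {S : Matrix n n α} (hS : IsUnit S.det) (i : m) (j : n) :
    S.det * (R * S⁻¹) i j = (S.updateRow j (R i)).det := by
  rw [← cramer_transpose_apply, ← det_smul_inv_vecMul_eq_cramer_transpose _ _ hS]
  rfl

lemma abs_det_le_factorial_mul_pow {R : Type*} [CommRing R] [LinearOrder R] [IsStrictOrderedRing R]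
    {n : ℕ} {M : Matrix (Fin n) (Fin n) R} {b : R}
    (hM : ∀ i j, |M i j| ≤ b) : |M.det| ≤ n.factorial * b ^ n := by
  simpa using det_le (abv := AbsoluteValue.abs) hM

lemma exists_int_natAbs_det_mul_mul_inv_apply {m : Type*} {n : ℕ} (R : Matrix m (Fin n) ℤ)
    {S : Matrix (Fin n) (Fin n) ℤ} (hS : S.det ≠ 0) {b : ℤ} (hR : ∀ i k, |R i k| ≤ b)
    (hSb : ∀ k k', |S k k'| ≤ b) (i : m) (j : Fin n) :
    ∃ z : ℤ, (S.det.natAbs : ℚ) *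
        (R.map ((↑) : ℤ → ℚ) * (S.map ((↑) : ℤ → ℚ))⁻¹) i j = z ∧
      |z| ≤ n.factorial * b ^ n := by
  have hSq : IsUnit (S.map ((↑) : ℤ → ℚ)).det := by
    rw [← Int.cast_det]
    exact isUnit_iff_ne_zero.mpr (Int.cast_ne_zero.mpr hS)
  have hcramer : (S.det : ℚ) * (R.map ((↑) : ℤ → ℚ) * (S.map ((↑) : ℤ → ℚ))⁻¹) i j =
      ((S.updateRow j (R i)).det : ℚ) := by
    rw [Int.cast_det, det_mul_mul_inv_apply _ hSq, Int.cast_det, map_updateRow]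
    rfl
  refine ⟨S.det.sign * (S.updateRow j (R i)).det, ?_, ?_⟩
  · have hq : (S.det.natAbs : ℚ) = S.det.sign * S.det := by
      rw [← Int.cast_natCast, ← Int.sign_mul_self_eq_natAbs, Int.cast_mul]
    rw [hq, mul_assoc, hcramer, Int.cast_mul]
  · rw [abs_mul, Int.abs_sign_of_ne_zero hS, one_mul]
    refine abs_det_le_factorial_mul_pow fun k k' => ?_
    rw [updateRow_apply]
    split_ifs
    · exact hR _ _
    · exact hSb _ _

end Matrix

lemma abs_le_starNorm {L N D : ℕ} (A : Fin (D + 1) → Matrix (Fin L) (Fin N) ℤ)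
    {d : Fin (D + 1)} (hd : d ≠ 0) (i : Fin L) (j : Fin N) : |A d i j| ≤ starNorm A := by
  rw [Int.abs_eq_natAbs, Nat.cast_le]
  exact (Finset.le_sup (f := fun p : Fin L × Fin N => (A d p.1 p.2).natAbs)
    (Finset.mem_univ (i, j))).trans
    (Finset.le_sup (f := fun d => Finset.univ.sup fun p : Fin L × Fin N => (A d p.1 p.2).natAbs)
      (Finset.mem_filter.mpr ⟨Finset.mem_univ _, hd⟩))

lemma CondB.mul_coeff_zero_eq_zero {L N D m : ℕ} {A : Fin (D + 1) → Matrix (Fin L) (Fin N) ℤ}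
    (hA : CondB A) {P : Matrix (Fin m) (Fin L) ℚ}
    (hP : ∀ d : Fin (D + 1), d ≠ 0 → P * (A d).map ((↑) : ℤ → ℚ) = 0) :
    P * (A 0).map ((↑) : ℤ → ℚ) = 0 := by
  ext i j
  have key := hA (P i) (Pi.single j 1) fun d hd => by
    rw [Matrix.mulVec_single_one]
    exact congrFun (congrFun (hP d hd) i) j
  rwa [Matrix.mulVec_single_one] at key

lemma CondB.map_eq_mul_map_submatrix {L N D n : ℕ} {A : Fin (D + 1) → Matrix (Fin L) (Fin N) ℤ}
    (hA : CondB A) {T : Matrix (Fin L) (Fin n) ℚ} {s : Fin n → Fin L}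
    (hT : Matrix.of (starRows A) = T * (Matrix.of (starRows A)).submatrix s id)
    (d : Fin (D + 1)) :
    (A d).map ((↑) : ℤ → ℚ) = T * ((A d).submatrix s id).map ((↑) : ℤ → ℚ) := by
  have hstar : ∀ d : Fin (D + 1), d ≠ 0 →
      (A d).map ((↑) : ℤ → ℚ) = T * ((A d).submatrix s id).map ((↑) : ℤ → ℚ) := by
    intro d hd
    obtain ⟨d', rfl⟩ := Fin.exists_succ_eq.mpr hd
    ext i j
    simpa [Matrix.mul_apply, starRows] using congrFun (congrFun hT i) (d', j)
  let P : Matrix (Fin L) (Fin L) ℚ := 1 - T * (1 : Matrix (Fin L) (Fin L) ℚ).submatrix s id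
  have hP : ∀ M : Matrix (Fin L) (Fin N) ℚ, P * M = M - T * M.submatrix s id := by
    intro M
    rw [Matrix.sub_mul, Matrix.one_mul, Matrix.mul_assoc]
    simpa using congrArg (T * ·) (Matrix.one_submatrix_mul s (Equiv.refl (Fin L)) M)
  rcases eq_or_ne d 0 with rfl | hd
  · have h0 := hA.mul_coeff_zero_eq_zero (P := P) fun d hd => by
      rw [hP, sub_eq_zero]
      exact hstar d hd
    rw [hP] at h0
    exact sub_eq_zero.mp h0
  · exact hstar d hd

theorem statement13_general (L N D l : ℕ) :
    ∃ C : ℝ, 0 < C ∧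
      ∀ A : Fin (D + 1) → Matrix (Fin L) (Fin N) ℤ,
        Module.finrank ℚ (Submodule.span ℚ (Set.range (starRows A))) = l →
        CondB A →
        ∃ (T : Matrix (Fin L) (Fin l) ℚ) (B : Fin (D + 1) → Matrix (Fin l) (Fin N) ℤ)
          (q : ℕ), 0 < q ∧
          (∀ d : Fin (D + 1), (A d).map ((↑) : ℤ → ℚ) = T * (B d).map ((↑) : ℤ → ℚ)) ∧
          LinearIndependent ℚ (starRows B) ∧
          (∀ i j, ∃ z : ℤ, (q : ℚ) * T i j = (z : ℚ)) ∧
          (∀ i j, (|(q : ℚ) * T i j| : ℚ) ≤ C * (starNorm A : ℝ) ^ l) := by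
  refine ⟨l.factorial, by positivity, fun A hrank hA => ?_⟩
  obtain ⟨s, hs_ind, hs_span⟩ := exists_linearIndependent_comp_fin ℚ (starRows A) hrank
  obtain ⟨p, hp⟩ :=
    Matrix.exists_det_submatrix_ne_zero (M := (Matrix.of (starRows A)).submatrix s id) hs_ind
  let R : Matrix (Fin L) (Fin l) ℤ := Matrix.of fun i k => A (p k).1.succ i (p k).2
  have hR : ∀ i k, |R i k| ≤ starNorm A := fun i k => abs_le_starNorm A (Fin.succ_ne_zero _) _ _
  have hdet : (R.submatrix s id).det ≠ 0 := by
    rw [← Int.cast_ne_zero (α := ℚ), Int.cast_det]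
    exact hp
  have hT := Matrix.eq_mul_inv_mul_submatrix (Matrix.of (starRows A)) s p
    (fun i => hs_span ▸ Submodule.subset_span (Set.mem_range_self i)) hp
  choose z hz hz_le using
    Matrix.exists_int_natAbs_det_mul_mul_inv_apply R hdet hR (fun _ _ => hR _ _)
  refine ⟨R.map ((↑) : ℤ → ℚ) * ((R.submatrix s id).map ((↑) : ℤ → ℚ))⁻¹,
    fun d => (A d).submatrix s id, _, Int.natAbs_pos.mpr hdet, hA.map_eq_mul_map_submatrix hT,
    hs_ind, fun i j => ⟨z i j, hz i j⟩, fun i j => ?_⟩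
  rw [hz]
  exact_mod_cast hz_le i j

/-- **Lemma 4.** If the `ℚ`-span of the rows of `A_*(x)` has dimension `ℓ` and `A`
satisfies condition (b), then `A(x) = T B(x)` with `T ∈ M_{L×ℓ}(ℚ)`,
`B(x) ∈ M_{ℓ×N}(ℤ[x])` whose non-constant part has `ℚ`-linearly independent rows, and
there is `q ≥ 1` with `qT` integral and `‖qT‖_∞ ≤ C(ℓ) ‖A_*‖_∞^ℓ`. -/
theorem statement13 (L N D l : ℕ) (hL : 0 < L) (hN : 0 < N) (hD : 0 < D) (hl : 0 < l) :
    ∃ C : ℝ, 0 < C ∧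
      ∀ A : Fin (D + 1) → Matrix (Fin L) (Fin N) ℤ,
        Module.finrank ℚ (Submodule.span ℚ (Set.range (starRows A))) = l →
        CondB A →
        ∃ (T : Matrix (Fin L) (Fin l) ℚ) (B : Fin (D + 1) → Matrix (Fin l) (Fin N) ℤ)
          (q : ℕ), 0 < q ∧
          (∀ d : Fin (D + 1), (A d).map ((↑) : ℤ → ℚ) = T * (B d).map ((↑) : ℤ → ℚ)) ∧
          LinearIndependent ℚ (starRows B) ∧
          (∀ i j, ∃ z : ℤ, (q : ℚ) * T i j = (z : ℚ)) ∧
          (∀ i j, (|(q : ℚ) * T i j| : ℚ) ≤ C * (starNorm A : ℝ) ^ l) :=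
  statement13_general L N D l
end
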